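/- arXiv:2406.01957 — 7 statements merged into one kernel-verified Lean document; each statement's English description precedes it below -/
import Mathlib

section
/- The kernel function x̂₅ belongs to W^{1,1}(0,∞), i.e., x̂₅ and its derivative x̂₅′ are Lebesgue integrable on (0,∞); moreover x̂₅(τ) → 0 as τ → ∞. -/
open MeasureTheory Real Set Filter

/-! Since `r0 h * exp (u h)` is the constant `α Λ / (α + u)`, `x̂₅ τ = P τ * exp (-u τ)` where `P`
is a constant minus a primitive of a bounded multiple of `βr0`, hence Lipschitz on `[0, ∞)`.
So `|x̂₅ τ| ≤ (A + B τ) exp (-u τ)`. Near each `τ > 0`, `x̂₅` is Lipschitz with constant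
`O((1 + τ) exp (-u τ / 2))`, which bounds `deriv x̂₅ τ` whether or not `x̂₅` is differentiable
there. Bounds of the form `(A + B τ) exp (-v τ)` give integrability on `(0, ∞)` and decay. -/

open scoped NNReal Topology

lemma linear_mul_exp_neg_le {A B v τ : ℝ} (hA : 0 ≤ A) (hB : 0 ≤ B) (hv : 0 < v) (hτ : 0 ≤ τ) :
    (A + B * τ) * exp (-v * τ) ≤ (A + 2 * B / v) * exp (-(v / 2) * τ) := by
  set e := exp (-(v / 2) * τ)
  have he : 0 < e := exp_pos _
  have he1 : e ≤ 1 := exp_le_one_iff.2 (by nlinarith)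
  have hsq : exp (-v * τ) = e * e := by rw [← exp_add]; ring_nf
  have hτe : τ * e ≤ 2 / v := by
    have h := add_one_le_exp ((v / 2) * τ)
    have hinv : exp ((v / 2) * τ) * e = 1 := by rw [← exp_add]; ring_nf; exact exp_zero
    rw [le_div_iff₀ hv]
    nlinarith
  have hAe : A * (e * e) ≤ A * e := mul_le_mul_of_nonneg_left (by nlinarith) hA
  have hBe : B * τ * (e * e) ≤ B * (2 / v) * e := by
    rw [show B * τ * (e * e) = B * (τ * e) * e by ring]
    exact mul_le_mul_of_nonneg_right (mul_le_mul_of_nonneg_left hτe hB) he.le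
  rw [hsq]
  linarith [show 2 * B / v * e = B * (2 / v) * e by ring]

lemma integrableOn_Ioi_of_abs_le_linear_mul_exp_neg {f : ℝ → ℝ} {A B v : ℝ} (hA : 0 ≤ A)
    (hB : 0 ≤ B) (hv : 0 < v) (hf : AEStronglyMeasurable f (volume.restrict (Ioi 0)))
    (hbound : ∀ τ, 0 < τ → |f τ| ≤ (A + B * τ) * exp (-v * τ)) :
    IntegrableOn f (Ioi 0) := by
  refine Integrable.mono' ((exp_neg_integrableOn_Ioi 0 (half_pos hv)).const_mul (A + 2 * B / v))
    hf ((ae_restrict_iff' measurableSet_Ioi).2 (ae_of_all _ fun τ hτ => ?_))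
  exact (hbound τ hτ).trans (linear_mul_exp_neg_le hA hB hv (le_of_lt hτ))

lemma tendsto_zero_of_abs_le_linear_mul_exp_neg {f : ℝ → ℝ} {A B v : ℝ} (hA : 0 ≤ A)
    (hB : 0 ≤ B) (hv : 0 < v) (hbound : ∀ τ, 0 < τ → |f τ| ≤ (A + B * τ) * exp (-v * τ)) :
    Tendsto f atTop (𝓝 0) := by
  have hexp : Tendsto (fun τ => (A + 2 * B / v) * exp (-(v / 2) * τ)) atTop (𝓝 0) := by
    simpa using (tendsto_exp_atBot.comp
      (tendsto_id.const_mul_atTop_of_neg (neg_lt_zero.2 (half_pos hv)))).const_mul _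
  refine squeeze_zero_norm' ?_ hexp
  filter_upwards [eventually_gt_atTop 0] with τ hτ
  exact (hbound τ hτ).trans (linear_mul_exp_neg_le hA hB hv hτ.le)

lemma abs_exp_neg_mul_sub_le {u m s t : ℝ} (hu : 0 ≤ u) (hs : m ≤ s) (ht : m ≤ t) :
    |exp (-u * t) - exp (-u * s)| ≤ u * exp (-u * m) * |t - s| := by
  wlog hst : s ≤ t generalizing s t
  · rw [abs_sub_comm, abs_sub_comm t]; exact this ht hs (le_of_not_ge hst)
  have hmono : exp (-u * t) ≤ exp (-u * s) := exp_le_exp.2 (by nlinarith)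
  have hfactor : exp (-u * s) - exp (-u * t) = exp (-u * s) * (1 - exp (-(u * (t - s)))) := by
    rw [mul_sub, mul_one, ← exp_add]; ring_nf
  rw [abs_sub_comm, abs_of_nonneg (sub_nonneg.2 hmono), abs_of_nonneg (sub_nonneg.2 hst),
    hfactor]
  calc exp (-u * s) * (1 - exp (-(u * (t - s)))) ≤ exp (-u * m) * (u * (t - s)) :=
        mul_le_mul (exp_le_exp.2 (by nlinarith)) (by linarith [one_sub_le_exp_neg (u * (t - s))])
          (by linarith [exp_le_one_iff.2 (neg_nonpos.2 (mul_nonneg hu (sub_nonneg.2 hst)))])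
          (exp_pos _).le
    _ = u * exp (-u * m) * (t - s) := by ring

lemma lipschitzOnWith_integral_Ici {E : Type*} [NormedAddCommGroup E] [NormedSpace ℝ E]
    {f : ℝ → E} {a : ℝ} {K : ℝ≥0} (hf : AEStronglyMeasurable f) (hK : ∀ x, a ≤ x → ‖f x‖ ≤ K) :
    LipschitzOnWith K (fun t => ∫ x in a..t, f x) (Ici a) := by
  have hbound : ∀ s t, a ≤ s → a ≤ t → ∀ x ∈ uIoc s t, ‖f x‖ ≤ K := fun s t hs ht x hx =>
    hK x (le_trans (le_min hs ht) (le_of_lt hx.1))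
  have hint : ∀ s t, a ≤ s → a ≤ t → IntervalIntegrable f volume s t := fun s t hs ht =>
    intervalIntegrable_iff.2 <| Measure.integrableOn_of_bounded measure_Ioc_lt_top.ne hf <|
      (ae_restrict_iff' measurableSet_uIoc).2 (ae_of_all _ (hbound s t hs ht))
  refine LipschitzOnWith.of_dist_le_mul fun s hs t ht => ?_
  rw [dist_eq_norm, intervalIntegral.integral_interval_sub_left (hint a s le_rfl hs)
    (hint a t le_rfl ht), Real.dist_eq]
  exact intervalIntegral.norm_integral_le_of_norm_le_const (hbound t s ht hs)

namespace LipschitzOnWith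

variable {P : ℝ → ℝ} {K : ℝ≥0} {u : ℝ}

lemma abs_le_abs_add_mul (hP : LipschitzOnWith K P (Ici 0)) {t : ℝ} (ht : 0 ≤ t) :
    |P t| ≤ |P 0| + K * t := by
  have h := hP.dist_le_mul t ht 0 self_mem_Ici
  rw [Real.dist_eq, Real.dist_eq, sub_zero, abs_of_nonneg ht] at h
  linarith [abs_sub_abs_le_abs_sub (P t) (P 0)]

lemma abs_mul_exp_neg_le (hP : LipschitzOnWith K P (Ici 0)) {τ : ℝ} (hτ : 0 ≤ τ) :
    |P τ * exp (-u * τ)| ≤ (|P 0| + K * τ) * exp (-u * τ) := by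
  rw [abs_mul, abs_exp]
  exact mul_le_mul_of_nonneg_right (hP.abs_le_abs_add_mul hτ) (exp_pos _).le

lemma abs_deriv_mul_exp_neg_le (hP : LipschitzOnWith K P (Ici 0)) (hu : 0 ≤ u) {τ : ℝ}
    (hτ : 0 < τ) :
    |deriv (fun t => P t * exp (-u * t)) τ| ≤
      (u * (|P 0| + K) + K + u * K * τ) * exp (-(u / 2) * τ) := by
  rw [← Real.norm_eq_abs]
  refine norm_deriv_le_of_lip' (by positivity) ?_
  filter_upwards [Ioo_mem_nhds (half_lt_self hτ) (lt_add_one τ)] with t ⟨ht1, ht2⟩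
  have ht0 : 0 ≤ t := (half_pos hτ).le.trans ht1.le
  have hPt : |P t| ≤ |P 0| + K * (τ + 1) :=
    (hP.abs_le_abs_add_mul ht0).trans (by gcongr)
  have hPdiff : |P t - P τ| ≤ K * |t - τ| := by
    simpa only [Real.dist_eq] using hP.dist_le_mul t ht0 τ hτ.le
  have hexp : |exp (-u * t) - exp (-u * τ)| ≤ u * exp (-(u / 2) * τ) * |t - τ| := by
    have h := abs_exp_neg_mul_sub_le hu (half_lt_self hτ).le ht1.le
    rwa [show -u * (τ / 2) = -(u / 2) * τ by ring] at h
  have hexpτ : exp (-u * τ) ≤ exp (-(u / 2) * τ) := exp_le_exp.2 (by nlinarith)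
  rw [Real.norm_eq_abs, Real.norm_eq_abs,
    show P t * exp (-u * t) - P τ * exp (-u * τ) =
      P t * (exp (-u * t) - exp (-u * τ)) + (P t - P τ) * exp (-u * τ) by ring]
  calc _ ≤ |P t| * |exp (-u * t) - exp (-u * τ)| + |P t - P τ| * exp (-u * τ) := by
        refine (abs_add_le _ _).trans_eq ?_
        rw [abs_mul, abs_mul, abs_of_pos (exp_pos _)]
    _ ≤ (|P 0| + K * (τ + 1)) * (u * exp (-(u / 2) * τ) * |t - τ|) +
          K * |t - τ| * exp (-(u / 2) * τ) := by
        gcongr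
    _ = _ := by ring

lemma integrableOn_mul_exp_neg (hP : LipschitzOnWith K P (Ici 0)) (hu : 0 < u) :
    IntegrableOn (fun t => P t * exp (-u * t)) (Ioi 0) :=
  integrableOn_Ioi_of_abs_le_linear_mul_exp_neg (abs_nonneg _) K.2 hu
    (((hP.continuousOn.mono Ioi_subset_Ici_self).mul (by fun_prop)).aestronglyMeasurable
      measurableSet_Ioi)
    fun _ hτ => hP.abs_mul_exp_neg_le hτ.le

lemma integrableOn_deriv_mul_exp_neg (hP : LipschitzOnWith K P (Ici 0)) (hu : 0 < u) :
    IntegrableOn (deriv fun t => P t * exp (-u * t)) (Ioi 0) :=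
  integrableOn_Ioi_of_abs_le_linear_mul_exp_neg (A := u * (|P 0| + K) + K) (B := u * K)
    (by positivity) (by positivity) (half_pos hu) (measurable_deriv _).aestronglyMeasurable
    fun _ hτ => hP.abs_deriv_mul_exp_neg_le hu.le hτ

lemma tendsto_mul_exp_neg (hP : LipschitzOnWith K P (Ici 0)) (hu : 0 < u) :
    Tendsto (fun t => P t * exp (-u * t)) atTop (𝓝 0) :=
  tendsto_zero_of_abs_le_linear_mul_exp_neg (abs_nonneg _) K.2 hu
    fun _ hτ => hP.abs_mul_exp_neg_le hτ.le

end LipschitzOnWith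

theorem stmt6_general
    (Λ u α βbar : ℝ)
    (hu : 0 < u)
    (βr0 : ℝ → ℝ) (hmeas : Measurable βr0)
    (hβr0 : ∀ τ, 0 ≤ τ → 0 < βr0 τ ∧ βr0 τ ≤ 1)
    (r0 : ℝ → ℝ) (hr0 : ∀ τ, r0 τ = α * Λ / (α + u) * Real.exp (-u * τ))
    (N0 : ℝ)
    (K : ℝ)
    (x50 : ℝ)
    (x5 : ℝ → ℝ)
    (hx5 : ∀ τ, x5 τ =
      (x50 - βbar * K / N0 * ∫ h in (0:ℝ)..τ, βr0 h * r0 h * Real.exp (u * h)) *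
        Real.exp (-u * τ)) :
    IntegrableOn x5 (Set.Ioi 0) ∧
    IntegrableOn (deriv x5) (Set.Ioi 0) ∧
    Filter.Tendsto x5 Filter.atTop (nhds 0) := by
  set k := βbar * K / N0 * (α * Λ / (α + u))
  -- `r0` is chosen so that `r0 h * exp (u h)` is constant
  have hx5' : x5 = fun τ => (x50 - ∫ h in (0:ℝ)..τ, k * βr0 h) * exp (-u * τ) := by
    funext τ
    simp only [hx5, hr0, intervalIntegral.integral_const_mul, mul_assoc, ← exp_add,
      neg_mul, neg_add_cancel, exp_zero, mul_one, intervalIntegral.integral_mul_const, k]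
    ring
  have hlip : LipschitzOnWith ‖k‖₊ (fun τ => x50 - ∫ h in (0:ℝ)..τ, k * βr0 h) (Ici 0) := by
    have hbound : ∀ h, 0 ≤ h → ‖k * βr0 h‖ ≤ ‖k‖₊ := fun h hh => by
      obtain ⟨hpos, hle⟩ := hβr0 h hh
      rw [norm_mul, coe_nnnorm, Real.norm_of_nonneg hpos.le]
      exact mul_le_of_le_one_right (norm_nonneg k) hle
    simpa using (LipschitzWith.const x50).lipschitzOnWith.sub
      (lipschitzOnWith_integral_Ici (measurable_const.mul hmeas).aestronglyMeasurable hbound)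
  rw [hx5']
  exact ⟨hlip.integrableOn_mul_exp_neg hu, hlip.integrableOn_deriv_mul_exp_neg hu,
    hlip.tendsto_mul_exp_neg hu⟩

/-- the kernel function `x̂₅` belongs to `W^{1,1}(0,∞)`: `x̂₅` and its
derivative `x̂₅′` are Lebesgue integrable on `(0,∞)`, and `x̂₅(τ) → 0` as `τ → ∞`. -/
theorem stmt6
    (Λ u μ σ γA γI α βs ρ θ ε βbar : ℝ)
    (hΛ : 0 < Λ) (hu : 0 < u) (hμ : 0 < μ) (hσ : 0 < σ)
    (hγA : 0 < γA) (hγI : 0 < γI) (hα : 0 < α) (hβs : 0 < βs)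
    (hρ0 : 0 < ρ) (hρ1 : ρ < 1) (hθ0 : 0 < θ) (hθ1 : θ ≤ 1)
    (hε0 : 0 < ε) (hε1 : ε ≤ 1) (hβbar : 0 < βbar)
    (βr0 : ℝ → ℝ) (hmeas : Measurable βr0)
    (hβr0 : ∀ τ, 0 ≤ τ → 0 < βr0 τ ∧ βr0 τ ≤ 1)
    (S0 : ℝ) (hS0 : S0 = Λ / (α + u))
    (r0 : ℝ → ℝ) (hr0 : ∀ τ, r0 τ = α * Λ / (α + u) * Real.exp (-u * τ))
    (N0 : ℝ) (hN0 : N0 = S0 + ∫ τ in Set.Ioi (0:ℝ), r0 τ)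
    (K : ℝ) (hK : K = θ + (1 - ρ) * σ * ε / (γA + u) + ρ * σ / (γI + μ + u))
    (x1 : ℝ) (hx1 : x1 = -(βs * S0 * K) / ((α + u) * N0))
    (x3 : ℝ) (hx3 : x3 = (1 - ρ) * σ / (γA + u))
    (x4 : ℝ) (hx4 : x4 = ρ * σ / (γI + μ + u))
    (x50 : ℝ) (hx50 : x50 = α * x1 + γA * x3 + γI * x4)
    (x5 : ℝ → ℝ)
    (hx5 : ∀ τ, x5 τ =
      (x50 - βbar * K / N0 * ∫ h in (0:ℝ)..τ, βr0 h * r0 h * Real.exp (u * h)) *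
        Real.exp (-u * τ)) :
    IntegrableOn x5 (Set.Ioi 0) ∧
    IntegrableOn (deriv x5) (Set.Ioi 0) ∧
    Filter.Tendsto x5 Filter.atTop (nhds 0) :=
  stmt6_general Λ u α βbar hu βr0 hmeas hβr0 r0 hr0 N0 K x50 x5 hx5
end

section
/- Suppose R₀ = 1. Then every solution (x₁,x₂,x₃,x₄,x₅) of the linearized system at the disease-free equilibrium is a scalar multiple of x̂: namely x₁ = x₂·x̂₁, x₃ = x₂·x̂₃, x₄ = x₂·x̂₄, and x₅(τ) = x₂·x̂₅(τ) for all τ ≥ 0. Hence the kernel of the linearization is one-dimensional, spanned by x̂. -/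
open MeasureTheory Real Set Filter

/-!
Equations (iii) and (iv) express `x₃` and `x₄` as multiples of `x₂`, so the force of infection
`θ x₂ + ε x₃ + x₄` equals `x₂ K`; equation (i) then gives `x₁`. Equation (v) is the linear ODE
`x₅' + u x₅ = -x₂ K 𝓔`, and variation of constants with the initial value (vi) yields `x₂ x̂₅`.
-/

theorem eq_mul_div_of_mul_sub_mul_eq_zero {K : Type*} [Field K] {a c x y : K} (hc : c ≠ 0)
    (h : a * x - c * y = 0) : y = x * (a / c) := by
  field_simp
  linear_combination -h

theorem eq_integral_mul_exp_of_hasDerivAt {f g : ℝ → ℝ} {u τ : ℝ} (hτ : 0 ≤ τ)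
    (hf : ∀ t ∈ Icc 0 τ, HasDerivAt f (g t - u * f t) t)
    (hg : IntervalIntegrable (fun t ↦ g t * exp (u * t)) volume 0 τ) :
    f τ = (f 0 + ∫ t in (0:ℝ)..τ, g t * exp (u * t)) * exp (-u * τ) := by
  have hderiv : ∀ t ∈ uIcc 0 τ,
      HasDerivAt (fun s ↦ f s * exp (u * s)) (g t * exp (u * t)) t := by
    intro t ht
    rw [uIcc_of_le hτ] at ht
    have hexp : HasDerivAt (fun s ↦ exp (u * s)) (exp (u * t) * u) t := by
      simpa using ((hasDerivAt_id t).const_mul u).exp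
    exact ((hf t ht).mul hexp).congr_deriv (by ring)
  have hftc := intervalIntegral.integral_eq_sub_of_hasDerivAt hderiv hg
  have hcancel : exp (u * τ) * exp (-u * τ) = 1 := by rw [← exp_add]; simp
  rw [hftc]
  simp only [mul_zero, exp_zero, mul_one]
  linear_combination (-f τ) * hcancel

theorem Measurable.intervalIntegrable_of_abs_le {f : ℝ → ℝ} {a b M : ℝ} (hf : Measurable f)
    (hbound : ∀ t ∈ uIoc a b, |f t| ≤ M) : IntervalIntegrable f volume a b := by
  refine (intervalIntegrable_const (c := M)).mono_fun' hf.aestronglyMeasurable ?_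
  filter_upwards [ae_restrict_mem measurableSet_uIoc] with t ht
  exact hbound t ht

theorem stmt7_general
    (Λ u μ σ γA γI α βs ρ θ ε βbar : ℝ)
    (hu : 0 < u) (hμ : 0 < μ)
    (hγA : 0 < γA) (hγI : 0 < γI) (hα : 0 < α)
    (βr0 : ℝ → ℝ) (hmeas : Measurable βr0)
    (hβr0 : ∀ τ, 0 ≤ τ → 0 < βr0 τ ∧ βr0 τ ≤ 1)
    (S0 : ℝ)
    (r0 : ℝ → ℝ) (hr0 : ∀ τ, r0 τ = α * Λ / (α + u) * Real.exp (-u * τ))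
    (N0 : ℝ)
    (K : ℝ) (hK : K = θ + (1 - ρ) * σ * ε / (γA + u) + ρ * σ / (γI + μ + u))
    (D : ℝ) (hD : D = βs * S0 / N0)
    (Ee : ℝ → ℝ) (hEe : ∀ τ, Ee τ = βbar * βr0 τ * r0 τ / N0)
    -- the vector x̂ spanning the kernel
    (xh1 : ℝ) (hxh1 : xh1 = -(βs * S0 * K) / ((α + u) * N0))
    (xh3 : ℝ) (hxh3 : xh3 = (1 - ρ) * σ / (γA + u))
    (xh4 : ℝ) (hxh4 : xh4 = ρ * σ / (γI + μ + u))
    (xh50 : ℝ) (hxh50 : xh50 = α * xh1 + γA * xh3 + γI * xh4)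
    (xh5 : ℝ → ℝ)
    (hxh5 : ∀ τ, xh5 τ =
      (xh50 - βbar * K / N0 * ∫ h in (0:ℝ)..τ, βr0 h * r0 h * Real.exp (u * h)) *
        Real.exp (-u * τ))
    -- an arbitrary solution of the linearized system (i)--(vi)
    (x1 x2 x3 x4 : ℝ) (x5 : ℝ → ℝ)
    (h1 : -(α + u) * x1 - D * (θ * x2 + ε * x3 + x4) = 0)
    (h3 : (1 - ρ) * σ * x2 - (γA + u) * x3 = 0)
    (h4 : ρ * σ * x2 - (γI + μ + u) * x4 = 0)
    (h5 : ∀ τ, 0 ≤ τ →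
      HasDerivAt x5 (-(Ee τ) * (θ * x2 + ε * x3 + x4) - u * x5 τ) τ)
    (h6 : x5 0 = α * x1 + γA * x3 + γI * x4) :
    x1 = x2 * xh1 ∧ x3 = x2 * xh3 ∧ x4 = x2 * xh4 ∧
    ∀ τ, 0 ≤ τ → x5 τ = x2 * xh5 τ := by
  have hx3 : x3 = x2 * xh3 := hxh3 ▸ eq_mul_div_of_mul_sub_mul_eq_zero (by positivity) h3
  have hx4 : x4 = x2 * xh4 := hxh4 ▸ eq_mul_div_of_mul_sub_mul_eq_zero (by positivity) h4
  have hforce : θ * x2 + ε * x3 + x4 = x2 * K := by rw [hx3, hx4, hxh3, hxh4, hK]; ring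
  have hx1 : x1 = x2 * xh1 := by
    have hαu : α + u ≠ 0 := by positivity
    have hx1' : x1 = (θ * x2 + ε * x3 + x4) * (-D / (α + u)) :=
      eq_mul_div_of_mul_sub_mul_eq_zero hαu (by linear_combination h1)
    rw [hx1', hD, hforce, hxh1, mul_comm (α + u), ← div_div]
    ring
  refine ⟨hx1, hx3, hx4, fun τ hτ ↦ ?_⟩
  have hr0exp : ∀ h, βr0 h * r0 h * exp (u * h) = α * Λ / (α + u) * βr0 h := fun h ↦ by
    rw [hr0, mul_assoc, mul_assoc, ← exp_add, neg_mul, neg_add_cancel, exp_zero]; ring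
  have hint : IntervalIntegrable (fun h ↦ βr0 h * r0 h * exp (u * h)) volume 0 τ := by
    simp only [hr0exp]
    refine (hmeas.intervalIntegrable_of_abs_le (M := 1) fun t ht ↦ ?_).const_mul _
    rw [uIoc_of_le hτ] at ht
    obtain ⟨hpos, hle⟩ := hβr0 t ht.1.le
    exact abs_le.2 ⟨by linarith, hle⟩
  have hsource : ∀ h, -(Ee h) * (θ * x2 + ε * x3 + x4) * exp (u * h) =
      -(x2 * βbar * K / N0) * (βr0 h * r0 h * exp (u * h)) := fun h ↦ by
    rw [hEe, hforce]; ring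
  rw [eq_integral_mul_exp_of_hasDerivAt hτ (fun t ht ↦ h5 t ht.1)
    (by simpa only [hsource] using hint.const_mul _), hxh5]
  simp only [hsource, intervalIntegral.integral_const_mul]
  rw [h6, hx1, hx3, hx4, hxh50]
  ring

/-- if `R₀ = 1`, every solution `(x₁,…,x₅)` of the linearized system
(i)–(vi) at the disease-free equilibrium is a scalar multiple of `x̂`:
`x₁ = x₂·x̂₁`, `x₃ = x₂·x̂₃`, `x₄ = x₂·x̂₄` and `x₅(τ) = x₂·x̂₅(τ)` for all `τ ≥ 0`;
hence the kernel is one-dimensional, spanned by `x̂`. -/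
theorem stmt7
    (Λ u μ σ γA γI α βs ρ θ ε βbar : ℝ)
    (hΛ : 0 < Λ) (hu : 0 < u) (hμ : 0 < μ) (hσ : 0 < σ)
    (hγA : 0 < γA) (hγI : 0 < γI) (hα : 0 < α) (hβs : 0 < βs)
    (hρ0 : 0 < ρ) (hρ1 : ρ < 1) (hθ0 : 0 < θ) (hθ1 : θ ≤ 1)
    (hε0 : 0 < ε) (hε1 : ε ≤ 1) (hβbar : 0 < βbar)
    (βr0 : ℝ → ℝ) (hmeas : Measurable βr0)
    (hβr0 : ∀ τ, 0 ≤ τ → 0 < βr0 τ ∧ βr0 τ ≤ 1)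
    (S0 : ℝ) (hS0 : S0 = Λ / (α + u))
    (r0 : ℝ → ℝ) (hr0 : ∀ τ, r0 τ = α * Λ / (α + u) * Real.exp (-u * τ))
    (N0 : ℝ) (hN0 : N0 = S0 + ∫ τ in Set.Ioi (0:ℝ), r0 τ)
    (K : ℝ) (hK : K = θ + (1 - ρ) * σ * ε / (γA + u) + ρ * σ / (γI + μ + u))
    (R0 : ℝ)
    (hR0def : R0 = (βs * S0 + βbar * ∫ τ in Set.Ioi (0:ℝ), βr0 τ * r0 τ) * K / ((σ + u) * N0))
    (B : ℝ) (hB : B = (βs * S0 + βbar * ∫ τ in Set.Ioi (0:ℝ), βr0 τ * r0 τ) / N0)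
    (D : ℝ) (hD : D = βs * S0 / N0)
    (Ee : ℝ → ℝ) (hEe : ∀ τ, Ee τ = βbar * βr0 τ * r0 τ / N0)
    -- the vector x̂ spanning the kernel
    (xh1 : ℝ) (hxh1 : xh1 = -(βs * S0 * K) / ((α + u) * N0))
    (xh2 : ℝ) (hxh2 : xh2 = 1)
    (xh3 : ℝ) (hxh3 : xh3 = (1 - ρ) * σ / (γA + u))
    (xh4 : ℝ) (hxh4 : xh4 = ρ * σ / (γI + μ + u))
    (xh50 : ℝ) (hxh50 : xh50 = α * xh1 + γA * xh3 + γI * xh4)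
    (xh5 : ℝ → ℝ)
    (hxh5 : ∀ τ, xh5 τ =
      (xh50 - βbar * K / N0 * ∫ h in (0:ℝ)..τ, βr0 h * r0 h * Real.exp (u * h)) *
        Real.exp (-u * τ))
    -- an arbitrary solution of the linearized system (i)--(vi)
    (x1 x2 x3 x4 : ℝ) (x5 : ℝ → ℝ)
    (h1 : -(α + u) * x1 - D * (θ * x2 + ε * x3 + x4) = 0)
    (h2 : B * (θ * x2 + ε * x3 + x4) - (σ + u) * x2 = 0)
    (h3 : (1 - ρ) * σ * x2 - (γA + u) * x3 = 0)
    (h4 : ρ * σ * x2 - (γI + μ + u) * x4 = 0)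
    (h5 : ∀ τ, 0 ≤ τ →
      HasDerivAt x5 (-(Ee τ) * (θ * x2 + ε * x3 + x4) - u * x5 τ) τ)
    (h6 : x5 0 = α * x1 + γA * x3 + γI * x4)
    (hR0 : R0 = 1) :
    x1 = x2 * xh1 ∧ x3 = x2 * xh3 ∧ x4 = x2 * xh4 ∧
    ∀ τ, 0 ≤ τ → x5 τ = x2 * xh5 τ :=
  stmt7_general Λ u μ σ γA γI α βs ρ θ ε βbar hu hμ hγA hγI hα βr0 hmeas hβr0 S0 r0 hr0 N0 K hK D hD
    Ee hEe xh1 hxh1 xh3 hxh3 xh4 hxh4 xh50 hxh50 xh5 hxh5 x1 x2 x3 x4 x5 h1 h3 h4 h5 h6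
end

section
/- Suppose R₀ ≠ 1. Then the only solution (x₁,x₂,x₃,x₄,x₅) of the linearized system at the disease-free equilibrium is the trivial one: x₁ = x₂ = x₃ = x₄ = 0 and x₅(τ) = 0 for all τ ≥ 0. Combined with the nontriviality of the kernel at R₀ = 1, this shows that zero is an eigenvalue of the linearization if and only if R₀ = 1. -/
open MeasureTheory Real Set Filter

/-! Equations (iii) and (iv) express `x₃, x₄` through `x₂`, which turns (ii) into
`(R₀ - 1)(σ + u) x₂ = 0`. Hence `x₂ = x₃ = x₄ = 0`, then `x₁ = 0` by (i), and `x₅` solves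
`x₅' = -u x₅` with `x₅(0) = 0`, so it vanishes by Grönwall uniqueness. -/

theorem eq_zero_of_hasDerivAt_smul_self_of_eq_zero {E : Type*} [NormedAddCommGroup E]
    [NormedSpace ℝ E] {f : ℝ → E} {c a : ℝ} (hf : ∀ t, a ≤ t → HasDerivAt f (c • f t) t)
    (ha : f a = 0) {t : ℝ} (ht : a ≤ t) : f t = 0 :=
  eq_zero_of_abs_deriv_le_mul_abs_self_of_eq_zero_right (K := |c|)
    (fun s hs => (hf s hs.1).continuousAt.continuousWithinAt)
    (fun s hs => (hf s hs.1).hasDerivWithinAt) ha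
    (fun s _ => (norm_smul c (f s)).le) t ⟨ht, le_rfl⟩

theorem force_of_infection_eq {ρ σ θ ε cA cI x2 x3 x4 : ℝ} (hA : cA ≠ 0) (hI : cI ≠ 0)
    (h3 : (1 - ρ) * σ * x2 - cA * x3 = 0) (h4 : ρ * σ * x2 - cI * x4 = 0) :
    θ * x2 + ε * x3 + x4 = (θ + (1 - ρ) * σ * ε / cA + ρ * σ / cI) * x2 := by
  field_simp
  linear_combination (-ε * cI) * h3 - cA * h4

theorem stmt8_general
    (u μ σ γA γI α βs ρ θ ε βbar : ℝ)
    (hu : 0 < u) (hμ : 0 < μ) (hσ : 0 < σ)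
    (hγA : 0 < γA) (hγI : 0 < γI) (hα : 0 < α)
    (βr0 : ℝ → ℝ)
    (S0 : ℝ)
    (r0 : ℝ → ℝ)
    (N0 : ℝ)
    (K : ℝ) (hK : K = θ + (1 - ρ) * σ * ε / (γA + u) + ρ * σ / (γI + μ + u))
    (R0 : ℝ)
    (hR0def : R0 = (βs * S0 + βbar * ∫ τ in Set.Ioi (0:ℝ), βr0 τ * r0 τ) * K / ((σ + u) * N0))
    (B : ℝ) (hB : B = (βs * S0 + βbar * ∫ τ in Set.Ioi (0:ℝ), βr0 τ * r0 τ) / N0)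
    (D : ℝ)
    (Ee : ℝ → ℝ)
    -- an arbitrary solution of the linearized system (i)--(vi)
    (x1 x2 x3 x4 : ℝ) (x5 : ℝ → ℝ)
    (h1 : -(α + u) * x1 - D * (θ * x2 + ε * x3 + x4) = 0)
    (h2 : B * (θ * x2 + ε * x3 + x4) - (σ + u) * x2 = 0)
    (h3 : (1 - ρ) * σ * x2 - (γA + u) * x3 = 0)
    (h4 : ρ * σ * x2 - (γI + μ + u) * x4 = 0)
    (h5 : ∀ τ, 0 ≤ τ →
      HasDerivAt x5 (-(Ee τ) * (θ * x2 + ε * x3 + x4) - u * x5 τ) τ)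
    (h6 : x5 0 = α * x1 + γA * x3 + γI * x4)
    (hR0 : R0 ≠ 1) :
    x1 = 0 ∧ x2 = 0 ∧ x3 = 0 ∧ x4 = 0 ∧ ∀ τ, 0 ≤ τ → x5 τ = 0 := by
  have hforce : θ * x2 + ε * x3 + x4 = K * x2 :=
    hK ▸ force_of_infection_eq (by positivity) (by positivity) h3 h4
  have hBK : B * K = R0 * (σ + u) := by
    rw [hR0def, hB]
    field_simp
  have hx2 : x2 = 0 := by
    have : (R0 - 1) * (σ + u) * x2 = 0 := by linear_combination h2 - B * hforce - x2 * hBK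
    simpa [sub_ne_zero.2 hR0, show σ + u ≠ 0 by positivity] using this
  subst hx2
  have hx3 : x3 = 0 := by simpa [show γA + u ≠ 0 by positivity] using h3
  have hx4 : x4 = 0 := by simpa [show γI + μ + u ≠ 0 by positivity] using h4
  subst hx3 hx4
  have hx1 : x1 = 0 := by simpa [-neg_add_rev, show α + u ≠ 0 by positivity] using h1
  subst hx1
  refine ⟨rfl, rfl, rfl, rfl, fun τ hτ => ?_⟩
  refine eq_zero_of_hasDerivAt_smul_self_of_eq_zero (c := -u) (fun t ht => ?_)
    (by simpa using h6) hτ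
  simpa using h5 t ht

/-- if `R₀ ≠ 1`, the only solution of the linearized system (i)–(vi) at the
disease-free equilibrium is the trivial one: `x₁ = x₂ = x₃ = x₄ = 0` and `x₅(τ) = 0`
for all `τ ≥ 0`; hence zero is an eigenvalue of the linearization iff `R₀ = 1`. -/
theorem stmt8
    (Λ u μ σ γA γI α βs ρ θ ε βbar : ℝ)
    (hΛ : 0 < Λ) (hu : 0 < u) (hμ : 0 < μ) (hσ : 0 < σ)
    (hγA : 0 < γA) (hγI : 0 < γI) (hα : 0 < α) (hβs : 0 < βs)
    (hρ0 : 0 < ρ) (hρ1 : ρ < 1) (hθ0 : 0 < θ) (hθ1 : θ ≤ 1)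
    (hε0 : 0 < ε) (hε1 : ε ≤ 1) (hβbar : 0 < βbar)
    (βr0 : ℝ → ℝ) (hmeas : Measurable βr0)
    (hβr0 : ∀ τ, 0 ≤ τ → 0 < βr0 τ ∧ βr0 τ ≤ 1)
    (S0 : ℝ) (hS0 : S0 = Λ / (α + u))
    (r0 : ℝ → ℝ) (hr0 : ∀ τ, r0 τ = α * Λ / (α + u) * Real.exp (-u * τ))
    (N0 : ℝ) (hN0 : N0 = S0 + ∫ τ in Set.Ioi (0:ℝ), r0 τ)
    (K : ℝ) (hK : K = θ + (1 - ρ) * σ * ε / (γA + u) + ρ * σ / (γI + μ + u))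
    (R0 : ℝ)
    (hR0def : R0 = (βs * S0 + βbar * ∫ τ in Set.Ioi (0:ℝ), βr0 τ * r0 τ) * K / ((σ + u) * N0))
    (B : ℝ) (hB : B = (βs * S0 + βbar * ∫ τ in Set.Ioi (0:ℝ), βr0 τ * r0 τ) / N0)
    (D : ℝ) (hD : D = βs * S0 / N0)
    (Ee : ℝ → ℝ) (hEe : ∀ τ, Ee τ = βbar * βr0 τ * r0 τ / N0)
    -- an arbitrary solution of the linearized system (i)--(vi)
    (x1 x2 x3 x4 : ℝ) (x5 : ℝ → ℝ)
    (h1 : -(α + u) * x1 - D * (θ * x2 + ε * x3 + x4) = 0)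
    (h2 : B * (θ * x2 + ε * x3 + x4) - (σ + u) * x2 = 0)
    (h3 : (1 - ρ) * σ * x2 - (γA + u) * x3 = 0)
    (h4 : ρ * σ * x2 - (γI + μ + u) * x4 = 0)
    (h5 : ∀ τ, 0 ≤ τ →
      HasDerivAt x5 (-(Ee τ) * (θ * x2 + ε * x3 + x4) - u * x5 τ) τ)
    (h6 : x5 0 = α * x1 + γA * x3 + γI * x4)
    (hR0 : R0 ≠ 1) :
    x1 = 0 ∧ x2 = 0 ∧ x3 = 0 ∧ x4 = 0 ∧ ∀ τ, 0 ≤ τ → x5 τ = 0 :=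
  stmt8_general u μ σ γA γI α βs ρ θ ε βbar hu hμ hσ hγA hγI hα βr0 S0 r0 N0 K hK R0 hR0def B hB D
    Ee x1 x2 x3 x4 x5 h1 h2 h3 h4 h5 h6 hR0
end

section
/- The vector ξ̂ = (0, 1, εB/(γ_A+u), B/(γ_I+μ+u), 0) (with fifth component the zero function) solves the adjoint linearized system if and only if R₀ = 1; equivalently, equation (II) evaluated at ξ̂ reduces to B·K − (σ+u) = 0, which holds if and only if R₀ = 1, while equations (I), (III), (IV), (V), (VI) hold at ξ̂ unconditionally. -/
open MeasureTheory Real Set Filter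

/-! Since `ξ̂₁ = 0` and `ξ̂₅ = 0`, every equation of the adjoint system at `ξ̂` is an identity
between real numbers: (III) and (IV) hold by the choice of `ξ̂₃` and `ξ̂₄`, the left-hand side of
(II) expands to `B·K − (σ+u)`, and `R₀ = B·K/(σ+u)`. -/

theorem stmt9_general
    (u μ σ γA γI α βs ρ θ ε βbar : ℝ)
    (hu : 0 < u) (hμ : 0 < μ) (hσ : 0 < σ)
    (hγA : 0 < γA) (hγI : 0 < γI)
    (βr0 : ℝ → ℝ)
    (S0 : ℝ)
    (r0 : ℝ → ℝ)
    (N0 : ℝ)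
    (K : ℝ) (hK : K = θ + (1 - ρ) * σ * ε / (γA + u) + ρ * σ / (γI + μ + u))
    (R0 : ℝ)
    (hR0def : R0 = (βs * S0 + βbar * ∫ τ in Set.Ioi (0:ℝ), βr0 τ * r0 τ) * K / ((σ + u) * N0))
    (B : ℝ) (hB : B = (βs * S0 + βbar * ∫ τ in Set.Ioi (0:ℝ), βr0 τ * r0 τ) / N0)
    (D : ℝ)
    (Ee : ℝ → ℝ)
    -- the components of the adjoint kernel vector ξ̂
    (ξ1 ξ2 : ℝ) (hξ1 : ξ1 = 0) (hξ2 : ξ2 = 1)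
    (ξ3 : ℝ) (hξ3 : ξ3 = ε * B / (γA + u))
    (ξ4 : ℝ) (hξ4 : ξ4 = B / (γI + μ + u))
    (ξ5 : ℝ → ℝ) (hξ5 : ∀ τ, ξ5 τ = 0) :
    -- (I)
    (-(α + u) * ξ1 = 0) ∧
    -- (III)
    (-ε * D * ξ1 + ε * B * ξ2 - (γA + u) * ξ3
      - ε * (∫ τ in Set.Ioi (0:ℝ), Ee τ * ξ5 τ) = 0) ∧
    -- (IV)
    (-D * ξ1 + B * ξ2 - (γI + μ + u) * ξ4
      - (∫ τ in Set.Ioi (0:ℝ), Ee τ * ξ5 τ) = 0) ∧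
    -- (V)
    (∀ τ, 0 ≤ τ → HasDerivAt ξ5 (u * ξ5 τ) τ) ∧
    -- (VI)
    (ξ5 0 = 0) ∧
    -- (II) holds iff R₀ = 1
    ((-θ * D * ξ1 + (θ * B - (σ + u)) * ξ2 + (1 - ρ) * σ * ξ3 + ρ * σ * ξ4
      - θ * (∫ τ in Set.Ioi (0:ℝ), Ee τ * ξ5 τ) = 0) ↔ R0 = 1) ∧
    -- the reduction of (II) to B·K − (σ+u) = 0, which holds iff R₀ = 1
    (B * K - (σ + u) = 0 ↔ R0 = 1) := by
  obtain rfl : ξ5 = 0 := funext hξ5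
  subst hξ1 hξ2 hξ3 hξ4
  have hC : ∫ τ in Set.Ioi (0:ℝ), Ee τ * (0 : ℝ → ℝ) τ = 0 := by simp
  have hR0 : R0 = B * K / (σ + u) := by rw [hR0def, hB, div_mul_eq_mul_div, div_div, mul_comm N0]
  have hII : B * K - (σ + u) = 0 ↔ R0 = 1 := by
    rw [hR0, div_eq_one_iff_eq (by positivity), sub_eq_zero]
  refine ⟨by ring, ?_, ?_, fun _ _ => by simp, rfl, ?_, hII⟩
  · rw [hC, mul_div_cancel₀ _ (by positivity)]
    ring
  · rw [hC, mul_div_cancel₀ _ (by positivity)]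
    ring
  · convert hII using 2
    rw [hC, hK]
    ring

/-- `ξ̂ = (0, 1, εB/(γ_A+u), B/(γ_I+μ+u), 0)` solves the adjoint linearized
system iff `R₀ = 1`: equations (I), (III), (IV), (V), (VI) hold at `ξ̂` unconditionally,
and equation (II) at `ξ̂` reduces to `B·K − (σ+u) = 0`, which holds iff `R₀ = 1`. -/
theorem stmt9
    (Λ u μ σ γA γI α βs ρ θ ε βbar : ℝ)
    (hΛ : 0 < Λ) (hu : 0 < u) (hμ : 0 < μ) (hσ : 0 < σ)
    (hγA : 0 < γA) (hγI : 0 < γI) (hα : 0 < α) (hβs : 0 < βs)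
    (hρ0 : 0 < ρ) (hρ1 : ρ < 1) (hθ0 : 0 < θ) (hθ1 : θ ≤ 1)
    (hε0 : 0 < ε) (hε1 : ε ≤ 1) (hβbar : 0 < βbar)
    (βr0 : ℝ → ℝ) (hmeas : Measurable βr0)
    (hβr0 : ∀ τ, 0 ≤ τ → 0 < βr0 τ ∧ βr0 τ ≤ 1)
    (S0 : ℝ) (hS0 : S0 = Λ / (α + u))
    (r0 : ℝ → ℝ) (hr0 : ∀ τ, r0 τ = α * Λ / (α + u) * Real.exp (-u * τ))
    (N0 : ℝ) (hN0 : N0 = S0 + ∫ τ in Set.Ioi (0:ℝ), r0 τ)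
    (K : ℝ) (hK : K = θ + (1 - ρ) * σ * ε / (γA + u) + ρ * σ / (γI + μ + u))
    (R0 : ℝ)
    (hR0def : R0 = (βs * S0 + βbar * ∫ τ in Set.Ioi (0:ℝ), βr0 τ * r0 τ) * K / ((σ + u) * N0))
    (B : ℝ) (hB : B = (βs * S0 + βbar * ∫ τ in Set.Ioi (0:ℝ), βr0 τ * r0 τ) / N0)
    (D : ℝ) (hD : D = βs * S0 / N0)
    (Ee : ℝ → ℝ) (hEe : ∀ τ, Ee τ = βbar * βr0 τ * r0 τ / N0)
    -- the components of the adjoint kernel vector ξ̂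
    (ξ1 ξ2 : ℝ) (hξ1 : ξ1 = 0) (hξ2 : ξ2 = 1)
    (ξ3 : ℝ) (hξ3 : ξ3 = ε * B / (γA + u))
    (ξ4 : ℝ) (hξ4 : ξ4 = B / (γI + μ + u))
    (ξ5 : ℝ → ℝ) (hξ5 : ∀ τ, ξ5 τ = 0) :
    -- (I)
    (-(α + u) * ξ1 = 0) ∧
    -- (III)
    (-ε * D * ξ1 + ε * B * ξ2 - (γA + u) * ξ3
      - ε * (∫ τ in Set.Ioi (0:ℝ), Ee τ * ξ5 τ) = 0) ∧
    -- (IV)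
    (-D * ξ1 + B * ξ2 - (γI + μ + u) * ξ4
      - (∫ τ in Set.Ioi (0:ℝ), Ee τ * ξ5 τ) = 0) ∧
    -- (V)
    (∀ τ, 0 ≤ τ → HasDerivAt ξ5 (u * ξ5 τ) τ) ∧
    -- (VI)
    (ξ5 0 = 0) ∧
    -- (II) holds iff R₀ = 1
    ((-θ * D * ξ1 + (θ * B - (σ + u)) * ξ2 + (1 - ρ) * σ * ξ3 + ρ * σ * ξ4
      - θ * (∫ τ in Set.Ioi (0:ℝ), Ee τ * ξ5 τ) = 0) ↔ R0 = 1) ∧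
    -- the reduction of (II) to B·K − (σ+u) = 0, which holds iff R₀ = 1
    (B * K - (σ + u) = 0 ↔ R0 = 1) :=
  stmt9_general u μ σ γA γI α βs ρ θ ε βbar hu hμ hσ hγA hγI βr0 S0 r0 N0 K hK R0 hR0def B hB D Ee
    ξ1 ξ2 hξ1 hξ2 ξ3 hξ3 ξ4 hξ4 ξ5 hξ5
end

section
/- Every solution (ξ₁,ξ₂,ξ₃,ξ₄,ξ₅) of the adjoint linearized system satisfies ξ₅(τ) = 0 for all τ ≥ 0, ξ₁ = 0, ξ₃ = ξ₂·εB/(γ_A+u), and ξ₄ = ξ₂·B/(γ_I+μ+u); moreover, if R₀ ≠ 1 then additionally ξ₂ = 0, so the solution is trivial. Hence at R₀ = 1 the kernel of the adjoint linearization is one-dimensional, spanned by ξ̂ = (0, 1, εB/(γ_A+u), B/(γ_I+μ+u), 0). -/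
open MeasureTheory Real Set Filter

/-!
Equations (V) and (VI), `ξ₅' = u ξ₅` with `ξ₅(0) = 0`, force `ξ₅ ≡ 0` by uniqueness of solutions
of linear ODEs, so the integral term `C(ξ₅)` vanishes and (I) gives `ξ₁ = 0`. Equations (III) and
(IV) then express `ξ₃` and `ξ₄` as multiples of `ξ₂`, and substituting them into (II) leaves
`ξ₂ (B K - (σ + u)) = 0`. Since `R₀ = B K / (σ + u)`, the bracket vanishes only when `R₀ = 1`.
-/

theorem eq_zero_of_hasDerivAt_smul_self {E : Type*} [NormedAddCommGroup E] [NormedSpace ℝ E]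
    {f : ℝ → E} (c : ℝ) (hf : ∀ t, 0 ≤ t → HasDerivAt f (c • f t) t) (hf0 : f 0 = 0) :
    ∀ t, 0 ≤ t → f t = 0 := fun t ht =>
  ODE_solution_unique (v := fun _ x => c • x) (fun _ => lipschitzWith_smul c)
    (fun s hs => (hf s hs.1).continuousAt.continuousWithinAt)
    (fun s hs => (hf s hs.1).hasDerivWithinAt)
    continuousOn_const (fun _ _ => by simpa using hasDerivWithinAt_const _ _ (0 : E))
    hf0 ⟨ht, le_rfl⟩

theorem stmt10_general
    (u μ σ γA γI α βs ρ θ ε βbar : ℝ)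
    (hu : 0 < u) (hμ : 0 < μ) (hσ : 0 < σ)
    (hγA : 0 < γA) (hγI : 0 < γI) (hα : 0 < α)
    (βr0 : ℝ → ℝ)
    (S0 : ℝ)
    (r0 : ℝ → ℝ)
    (N0 : ℝ)
    (K : ℝ) (hK : K = θ + (1 - ρ) * σ * ε / (γA + u) + ρ * σ / (γI + μ + u))
    (R0 : ℝ)
    (hR0def : R0 = (βs * S0 + βbar * ∫ τ in Set.Ioi (0:ℝ), βr0 τ * r0 τ) * K / ((σ + u) * N0))
    (B : ℝ) (hB : B = (βs * S0 + βbar * ∫ τ in Set.Ioi (0:ℝ), βr0 τ * r0 τ) / N0)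
    (D : ℝ)
    (Ee : ℝ → ℝ)
    -- an arbitrary solution of the adjoint linearized system (I)--(VI)
    (ξ1 ξ2 ξ3 ξ4 : ℝ) (ξ5 : ℝ → ℝ)
    (hI : -(α + u) * ξ1 = 0)
    (hII : -θ * D * ξ1 + (θ * B - (σ + u)) * ξ2 + (1 - ρ) * σ * ξ3 + ρ * σ * ξ4
      - θ * (∫ τ in Set.Ioi (0:ℝ), Ee τ * ξ5 τ) = 0)
    (hIII : -ε * D * ξ1 + ε * B * ξ2 - (γA + u) * ξ3
      - ε * (∫ τ in Set.Ioi (0:ℝ), Ee τ * ξ5 τ) = 0)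
    (hIV : -D * ξ1 + B * ξ2 - (γI + μ + u) * ξ4
      - (∫ τ in Set.Ioi (0:ℝ), Ee τ * ξ5 τ) = 0)
    (hV : ∀ τ, 0 ≤ τ → HasDerivAt ξ5 (u * ξ5 τ) τ)
    (hVI : ξ5 0 = 0) :
    (∀ τ, 0 ≤ τ → ξ5 τ = 0) ∧
    ξ1 = 0 ∧
    ξ3 = ξ2 * (ε * B / (γA + u)) ∧
    ξ4 = ξ2 * (B / (γI + μ + u)) ∧
    (R0 ≠ 1 → ξ2 = 0) := by
  have hξ5 := eq_zero_of_hasDerivAt_smul_self u hV hVI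
  have hC : ∫ τ in Ioi (0:ℝ), Ee τ * ξ5 τ = 0 :=
    setIntegral_eq_zero_of_forall_eq_zero fun τ hτ => by rw [hξ5 τ (le_of_lt hτ), mul_zero]
  have hξ1 : ξ1 = 0 := (mul_eq_zero.1 hI).resolve_left (by linarith)
  have hγAu : γA + u ≠ 0 := by positivity
  have hγIu : γI + μ + u ≠ 0 := by positivity
  have hξ3 : ξ3 = ξ2 * (ε * B / (γA + u)) := by
    field_simp
    linear_combination -hIII - ε * hC - ε * D * hξ1
  have hξ4 : ξ4 = ξ2 * (B / (γI + μ + u)) := by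
    field_simp
    linear_combination -hIV - hC - D * hξ1
  refine ⟨hξ5, hξ1, hξ3, hξ4, fun hR0 => ?_⟩
  have hR0B : R0 = B * K / (σ + u) := by rw [hR0def, hB, div_mul_eq_mul_div, div_div, mul_comm N0]
  have hBK : B * K - (σ + u) ≠ 0 := fun h => hR0 <| by
    rw [hR0B, sub_eq_zero.1 h, div_self (by positivity)]
  have key : ξ2 * (B * K - (σ + u)) = 0 := by
    rw [hK]
    linear_combination hII - (1 - ρ) * σ * hξ3 - ρ * σ * hξ4 + θ * hC + θ * D * hξ1
  exact (mul_eq_zero.1 key).resolve_right hBK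

/-- every solution `(ξ₁,…,ξ₅)` of the adjoint linearized system satisfies
`ξ₅ ≡ 0` on `[0,∞)`, `ξ₁ = 0`, `ξ₃ = ξ₂·εB/(γ_A+u)`, `ξ₄ = ξ₂·B/(γ_I+μ+u)`; and if
`R₀ ≠ 1` then also `ξ₂ = 0`. Hence at `R₀ = 1` the adjoint kernel is one-dimensional,
spanned by `ξ̂ = (0, 1, εB/(γ_A+u), B/(γ_I+μ+u), 0)`. -/
theorem stmt10
    (Λ u μ σ γA γI α βs ρ θ ε βbar : ℝ)
    (hΛ : 0 < Λ) (hu : 0 < u) (hμ : 0 < μ) (hσ : 0 < σ)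
    (hγA : 0 < γA) (hγI : 0 < γI) (hα : 0 < α) (hβs : 0 < βs)
    (hρ0 : 0 < ρ) (hρ1 : ρ < 1) (hθ0 : 0 < θ) (hθ1 : θ ≤ 1)
    (hε0 : 0 < ε) (hε1 : ε ≤ 1) (hβbar : 0 < βbar)
    (βr0 : ℝ → ℝ) (hmeas : Measurable βr0)
    (hβr0 : ∀ τ, 0 ≤ τ → 0 < βr0 τ ∧ βr0 τ ≤ 1)
    (S0 : ℝ) (hS0 : S0 = Λ / (α + u))
    (r0 : ℝ → ℝ) (hr0 : ∀ τ, r0 τ = α * Λ / (α + u) * Real.exp (-u * τ))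
    (N0 : ℝ) (hN0 : N0 = S0 + ∫ τ in Set.Ioi (0:ℝ), r0 τ)
    (K : ℝ) (hK : K = θ + (1 - ρ) * σ * ε / (γA + u) + ρ * σ / (γI + μ + u))
    (R0 : ℝ)
    (hR0def : R0 = (βs * S0 + βbar * ∫ τ in Set.Ioi (0:ℝ), βr0 τ * r0 τ) * K / ((σ + u) * N0))
    (B : ℝ) (hB : B = (βs * S0 + βbar * ∫ τ in Set.Ioi (0:ℝ), βr0 τ * r0 τ) / N0)
    (D : ℝ) (hD : D = βs * S0 / N0)
    (Ee : ℝ → ℝ) (hEe : ∀ τ, Ee τ = βbar * βr0 τ * r0 τ / N0)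
    -- an arbitrary solution of the adjoint linearized system (I)--(VI)
    (ξ1 ξ2 ξ3 ξ4 : ℝ) (ξ5 : ℝ → ℝ)
    (hI : -(α + u) * ξ1 = 0)
    (hII : -θ * D * ξ1 + (θ * B - (σ + u)) * ξ2 + (1 - ρ) * σ * ξ3 + ρ * σ * ξ4
      - θ * (∫ τ in Set.Ioi (0:ℝ), Ee τ * ξ5 τ) = 0)
    (hIII : -ε * D * ξ1 + ε * B * ξ2 - (γA + u) * ξ3
      - ε * (∫ τ in Set.Ioi (0:ℝ), Ee τ * ξ5 τ) = 0)
    (hIV : -D * ξ1 + B * ξ2 - (γI + μ + u) * ξ4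
      - (∫ τ in Set.Ioi (0:ℝ), Ee τ * ξ5 τ) = 0)
    (hV : ∀ τ, 0 ≤ τ → HasDerivAt ξ5 (u * ξ5 τ) τ)
    (hVI : ξ5 0 = 0) :
    (∀ τ, 0 ≤ τ → ξ5 τ = 0) ∧
    ξ1 = 0 ∧
    ξ3 = ξ2 * (ε * B / (γA + u)) ∧
    ξ4 = ξ2 * (B / (γI + μ + u)) ∧
    (R0 ≠ 1 → ξ2 = 0) :=
  stmt10_general u μ σ γA γI α βs ρ θ ε βbar hu hμ hσ hγA hγI hα βr0 S0 r0 N0 K hK R0 hR0def B hB D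
    Ee ξ1 ξ2 ξ3 ξ4 ξ5 hI hII hIII hIV hV hVI
end

section
/- The kernel function x̂₅ satisfies the closed-form integral identity ∫₀^∞ x̂₅(τ) dτ = x̂₅(0)/u − (β̄·K/(u·N⁰))·∫₀^∞ β_{r0}(h)·r⁰(h) dh. -/
/-!
With `g = β_{r0} r⁰`, which is integrable on `(0, ∞)` because `β_{r0}` is bounded and `r⁰` decays
exponentially, `x̂₅(τ) = x̂₅(0) e^{-uτ} - (β̄K/N⁰) ∫₀^τ g(h) e^{-u(τ-h)} dh`. By Fubini on the region
`0 < h ≤ τ`, the integral of the convolution term is `∫₀^∞ g(h) ∫_h^∞ e^{-u(τ-h)} dτ dh = (∫₀^∞ g) / u`.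
-/

open MeasureTheory Real Set Filter

lemma integral_exp_neg_mul_Ioi {u : ℝ} (hu : 0 < u) (c : ℝ) :
    ∫ τ in Ioi c, exp (-u * τ) = exp (-u * c) / u := by
  rw [integral_exp_mul_Ioi (neg_neg_of_pos hu), neg_div_neg_eq]

noncomputable def expConvKernel (g : ℝ → ℝ) (u τ h : ℝ) : ℝ :=
  (Iic τ).indicator (fun h ↦ g h * exp (u * h)) h * exp (-u * τ)

namespace expConvKernel

variable {g : ℝ → ℝ} {u : ℝ}

lemma eq_indicator_Ici (τ h : ℝ) :
    expConvKernel g u τ h = (Ici h).indicator (fun τ ↦ g h * exp (u * h) * exp (-u * τ)) τ := by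
  by_cases hhτ : h ≤ τ <;> simp [expConvKernel, hhτ]

lemma norm_eq (τ h : ℝ) : ‖expConvKernel g u τ h‖ = expConvKernel (fun h ↦ |g h|) u τ h := by
  by_cases hhτ : h ≤ τ <;> simp [expConvKernel, hhτ]

lemma measurable_uncurry (hg : Measurable g) :
    Measurable (Function.uncurry (expConvKernel g u)) := by
  have : Function.uncurry (expConvKernel g u) =
      fun p : ℝ × ℝ ↦ (if p.2 ≤ p.1 then g p.2 * exp (u * p.2) else 0) * exp (-u * p.1) := by
    ext ⟨τ, h⟩
    by_cases hhτ : h ≤ τ <;> simp [expConvKernel, hhτ]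
  rw [this]
  exact (Measurable.ite (measurableSet_le measurable_snd measurable_fst) (by fun_prop)
    measurable_const).mul (by fun_prop)

lemma integrableOn_left (hu : 0 < u) (h : ℝ) :
    IntegrableOn (fun τ ↦ expConvKernel g u τ h) (Ioi 0) := by
  simp_rw [eq_indicator_Ici]
  exact ((exp_neg_integrableOn_Ioi 0 hu).const_mul _).indicator measurableSet_Ici

lemma integral_left (hu : 0 < u) {h : ℝ} (hh : 0 < h) :
    ∫ τ in Ioi 0, expConvKernel g u τ h = g h / u := by
  simp_rw [eq_indicator_Ici]
  rw [setIntegral_indicator measurableSet_Ici,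
    inter_eq_self_of_subset_right (Ici_subset_Ioi.2 hh), integral_Ici_eq_integral_Ioi,
    integral_const_mul, integral_exp_neg_mul_Ioi hu, mul_div_assoc', mul_assoc, ← exp_add]
  simp

lemma integral_right {τ : ℝ} (hτ : 0 ≤ τ) :
    ∫ h in Ioi 0, expConvKernel g u τ h = (∫ h in 0..τ, g h * exp (u * h)) * exp (-u * τ) := by
  simp only [expConvKernel]
  rw [integral_mul_const, setIntegral_indicator measurableSet_Iic, Ioi_inter_Iic,
    intervalIntegral.integral_of_le hτ]

lemma integrable_uncurry (hu : 0 < u) (hg : Measurable g) (hgi : IntegrableOn g (Ioi 0)) :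
    Integrable (Function.uncurry (expConvKernel g u))
      ((volume.restrict (Ioi 0)).prod (volume.restrict (Ioi 0))) := by
  refine (integrable_prod_iff' (measurable_uncurry hg).aestronglyMeasurable).2
    ⟨.of_forall (integrableOn_left hu), ?_⟩
  refine (hgi.abs.div_const u).congr ?_
  filter_upwards [self_mem_ae_restrict measurableSet_Ioi] with h hh
  simp only [Function.uncurry_apply_pair, norm_eq]
  exact (integral_left (g := fun h ↦ |g h|) hu hh).symm

end expConvKernel

section

open expConvKernel

variable {g : ℝ → ℝ} {u : ℝ}

lemma integrableOn_integral_mul_exp_mul_exp_neg (hu : 0 < u) (hg : Measurable g)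
    (hgi : IntegrableOn g (Ioi 0)) :
    IntegrableOn (fun τ ↦ (∫ h in 0..τ, g h * exp (u * h)) * exp (-u * τ)) (Ioi 0) := by
  refine (integrable_uncurry hu hg hgi).integral_prod_left.congr ?_
  filter_upwards [self_mem_ae_restrict measurableSet_Ioi] with τ hτ
  exact integral_right hτ.le

lemma integral_integral_mul_exp_mul_exp_neg (hu : 0 < u) (hg : Measurable g)
    (hgi : IntegrableOn g (Ioi 0)) :
    ∫ τ in Ioi 0, (∫ h in 0..τ, g h * exp (u * h)) * exp (-u * τ) = (∫ h in Ioi 0, g h) / u := by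
  calc ∫ τ in Ioi 0, (∫ h in 0..τ, g h * exp (u * h)) * exp (-u * τ)
      = ∫ τ in Ioi 0, ∫ h in Ioi 0, expConvKernel g u τ h :=
        setIntegral_congr_fun measurableSet_Ioi fun τ hτ ↦ (integral_right hτ.le).symm
    _ = ∫ h in Ioi 0, ∫ τ in Ioi 0, expConvKernel g u τ h :=
        integral_integral_swap (integrable_uncurry hu hg hgi)
    _ = ∫ h in Ioi 0, g h / u :=
        setIntegral_congr_fun measurableSet_Ioi fun h hh ↦ integral_left hu hh
    _ = (∫ h in Ioi 0, g h) / u := integral_div u g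

end

theorem stmt13_general
    (Λ u α βbar : ℝ) (hu : 0 < u)
    (βr0 : ℝ → ℝ) (hmeas : Measurable βr0)
    (hβr0 : ∀ τ, 0 ≤ τ → 0 < βr0 τ ∧ βr0 τ ≤ 1)
    (r0 : ℝ → ℝ) (hr0 : ∀ τ, r0 τ = α * Λ / (α + u) * Real.exp (-u * τ))
    (N0 : ℝ) (K : ℝ) (x50 : ℝ) (x5 : ℝ → ℝ)
    (hx5 : ∀ τ, x5 τ =
      (x50 - βbar * K / N0 * ∫ h in (0:ℝ)..τ, βr0 h * r0 h * Real.exp (u * h)) *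
        Real.exp (-u * τ)) :
    (∫ τ in Set.Ioi (0:ℝ), x5 τ) =
      x50 / u - βbar * K / (u * N0) * ∫ h in Set.Ioi (0:ℝ), βr0 h * r0 h := by
  have hr0_eq : r0 = fun τ ↦ α * Λ / (α + u) * exp (-u * τ) := funext hr0
  have hg_meas : Measurable fun h ↦ βr0 h * r0 h := hmeas.mul (by rw [hr0_eq]; fun_prop)
  have hg_int : IntegrableOn (fun h ↦ βr0 h * r0 h) (Ioi 0) := by
    refine Integrable.bdd_mul (c := 1) ?_ hmeas.aestronglyMeasurable ?_
    · rw [hr0_eq]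
      exact (exp_neg_integrableOn_Ioi 0 hu).const_mul _
    · filter_upwards [self_mem_ae_restrict measurableSet_Ioi] with τ hτ
      obtain ⟨hpos, hle⟩ := hβr0 τ hτ.le
      rwa [norm_of_nonneg hpos.le]
  have hx5_eq : x5 = fun τ ↦ x50 * exp (-u * τ) -
      βbar * K / N0 * ((∫ h in (0:ℝ)..τ, βr0 h * r0 h * exp (u * h)) * exp (-u * τ)) := by
    funext τ
    rw [hx5]
    ring
  rw [hx5_eq, integral_sub ((exp_neg_integrableOn_Ioi 0 hu).const_mul x50)
      ((integrableOn_integral_mul_exp_mul_exp_neg hu hg_meas hg_int).const_mul _),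
    integral_const_mul, integral_const_mul, integral_exp_neg_mul_Ioi hu,
    integral_integral_mul_exp_mul_exp_neg hu hg_meas hg_int]
  simp only [mul_zero, exp_zero]
  ring

/-- the kernel function `x̂₅` satisfies the closed-form integral identity
`∫₀^∞ x̂₅(τ) dτ = x̂₅(0)/u − (β̄·K/(u·N⁰))·∫₀^∞ β_{r0}(h)·r⁰(h) dh`. -/
theorem stmt13
    (Λ u μ σ γA γI α βs ρ θ ε βbar : ℝ)
    (hΛ : 0 < Λ) (hu : 0 < u) (hμ : 0 < μ) (hσ : 0 < σ)
    (hγA : 0 < γA) (hγI : 0 < γI) (hα : 0 < α) (hβs : 0 < βs)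
    (hρ0 : 0 < ρ) (hρ1 : ρ < 1) (hθ0 : 0 < θ) (hθ1 : θ ≤ 1)
    (hε0 : 0 < ε) (hε1 : ε ≤ 1) (hβbar : 0 < βbar)
    (βr0 : ℝ → ℝ) (hmeas : Measurable βr0)
    (hβr0 : ∀ τ, 0 ≤ τ → 0 < βr0 τ ∧ βr0 τ ≤ 1)
    (S0 : ℝ) (hS0 : S0 = Λ / (α + u))
    (r0 : ℝ → ℝ) (hr0 : ∀ τ, r0 τ = α * Λ / (α + u) * Real.exp (-u * τ))
    (N0 : ℝ) (hN0 : N0 = S0 + ∫ τ in Set.Ioi (0:ℝ), r0 τ)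
    (K : ℝ) (hK : K = θ + (1 - ρ) * σ * ε / (γA + u) + ρ * σ / (γI + μ + u))
    (x1 : ℝ) (hx1 : x1 = -(βs * S0 * K) / ((α + u) * N0))
    (x3 : ℝ) (hx3 : x3 = (1 - ρ) * σ / (γA + u))
    (x4 : ℝ) (hx4 : x4 = ρ * σ / (γI + μ + u))
    (x50 : ℝ) (hx50 : x50 = α * x1 + γA * x3 + γI * x4)
    (x5 : ℝ → ℝ)
    (hx5 : ∀ τ, x5 τ =
      (x50 - βbar * K / N0 * ∫ h in (0:ℝ)..τ, βr0 h * r0 h * Real.exp (u * h)) *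
        Real.exp (-u * τ)) :
    (∫ τ in Set.Ioi (0:ℝ), x5 τ) =
      x50 / u - βbar * K / (u * N0) * ∫ h in Set.Ioi (0:ℝ), βr0 h * r0 h :=
  stmt13_general Λ u α βbar hu βr0 hmeas hβr0 r0 hr0 N0 K x50 x5 hx5
end

section
/- For the parameter values Λ = 20000, θ = 0.55, ε = 0.55, u = 1/(75·365), α = 10⁻⁶, σ = 1/5.2, ρ = 0.4, γ_A = 1/14, γ_I = 1/7, μ = 0.02, β_s = 0.10345, and β_{r0}(τ) = 1−η for 0 ≤ τ < τ̂, β_{r0}(τ) = 1 − η·e^{−γ(τ−τ̂)} for τ ≥ τ̂ with τ̂ = 200, η = 0.2, γ = 0.5, the bifurcation coefficient a is strictly negative: a < 0 (so the model undergoes a forward transcritical bifurcation at R₀ = 1). -/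
open MeasureTheory Real Set

/-!
With `J = ∫₀^∞ β_{r0}(τ) e^{-uτ} dτ`, the integral in the denominator of `β̄*` is
`αΛ/(α+u) · J`, so the threshold condition fixes the product `β̄* J` explicitly. Every
occurrence of `β̄*` in the first two terms of `a` comes with a factor `J`, so these terms are
an explicit number, which is negative for the given parameters. The remaining term is
`-(2u/Λ)(αu/(α+u)) (K β̄*)² ∫ β_{r0} e^{-uτ} ∫₀^τ β_{r0}`, which is nonpositive because
`β_{r0} ≥ 0`. The profile enters only through `J > 0`, which holds since `β_{r0} ≥ 1 - η > 0`.
-/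

noncomputable def waningProfile (τh η γ τ : ℝ) : ℝ :=
  if τ < τh then 1 - η else 1 - η * exp (-γ * (τ - τh))

section WaningProfile

variable {τh η γ : ℝ}

lemma measurable_waningProfile : Measurable (waningProfile τh η γ) :=
  Measurable.ite (measurableSet_lt measurable_id measurable_const) measurable_const
    (by fun_prop)

lemma waningProfile_le_one (hη : 0 ≤ η) (τ : ℝ) : waningProfile τh η γ τ ≤ 1 := by
  unfold waningProfile
  split_ifs
  · linarith
  · nlinarith [exp_pos (-γ * (τ - τh))]

lemma one_sub_le_waningProfile (hη : 0 ≤ η) (hγ : 0 ≤ γ) (τ : ℝ) :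
    1 - η ≤ waningProfile τh η γ τ := by
  unfold waningProfile
  split_ifs with h
  · rfl
  · have : exp (-γ * (τ - τh)) ≤ 1 := exp_le_one_iff.mpr (by nlinarith)
    nlinarith

lemma waningProfile_nonneg (hη₀ : 0 ≤ η) (hη₁ : η ≤ 1) (hγ : 0 ≤ γ) (τ : ℝ) :
    0 ≤ waningProfile τh η γ τ := by
  linarith [one_sub_le_waningProfile (τh := τh) hη₀ hγ τ]

lemma abs_waningProfile_le_one (hη₀ : 0 ≤ η) (hη₁ : η ≤ 1) (hγ : 0 ≤ γ) (τ : ℝ) :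
    |waningProfile τh η γ τ| ≤ 1 :=
  abs_le.mpr ⟨by linarith [waningProfile_nonneg (τh := τh) hη₀ hη₁ hγ τ],
    waningProfile_le_one hη₀ τ⟩

end WaningProfile

section ExponentialWeight

variable {u : ℝ} {β : ℝ → ℝ}

lemma integral_exp_neg_mul_Ioi_zero (hu : 0 < u) : ∫ τ in Ioi (0:ℝ), exp (-u * τ) = u⁻¹ := by
  rw [integral_exp_mul_Ioi (neg_lt_zero.mpr hu)]
  simp

lemma integrableOn_mul_exp_neg_Ioi (hu : 0 < u) (hβ : Measurable β) {C : ℝ}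
    (hC : ∀ τ, |β τ| ≤ C) : IntegrableOn (fun τ => β τ * exp (-u * τ)) (Ioi 0) :=
  (exp_neg_integrableOn_Ioi 0 hu).bdd_mul hβ.aestronglyMeasurable (ae_of_all _ hC)

lemma mul_inv_le_integral_mul_exp_neg_Ioi (hu : 0 < u) (hβ : Measurable β) {c C : ℝ}
    (hc : ∀ τ, c ≤ β τ) (hC : ∀ τ, |β τ| ≤ C) :
    c * u⁻¹ ≤ ∫ τ in Ioi (0:ℝ), β τ * exp (-u * τ) := by
  rw [← integral_exp_neg_mul_Ioi_zero hu, ← integral_const_mul]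
  exact setIntegral_mono_on ((exp_neg_integrableOn_Ioi 0 hu).const_mul c)
    (integrableOn_mul_exp_neg_Ioi hu hβ hC) measurableSet_Ioi
    fun τ _ => mul_le_mul_of_nonneg_right (hc τ) (exp_pos _).le

lemma setIntegral_mul_exp_neg_mul_intervalIntegral_nonneg (hβ : ∀ τ, 0 ≤ β τ) :
    0 ≤ ∫ τ in Ioi (0:ℝ), β τ * exp (-u * τ) * ∫ h in (0:ℝ)..τ, β h :=
  setIntegral_nonneg measurableSet_Ioi fun τ hτ =>
    mul_nonneg (mul_nonneg (hβ τ) (exp_pos _).le)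
      (intervalIntegral.integral_nonneg (le_of_lt hτ) fun h _ => hβ h)

end ExponentialWeight

lemma bifurcation_coeff_le_of_mul_eq {u Λ K α βs P Q J I βstar w : ℝ} (hw : βstar * J = w)
    (hI : 0 ≤ I) (hpre : 0 ≤ u / Λ * (α * u / (α + u))) :
    2 * u / Λ * K * (βstar * P * J - u / (α + u) * (βs + α * βstar * J) * Q
        - α * u / (α + u) * βstar ^ 2 * K * I)
      ≤ 2 * u / Λ * K * (w * P - u / (α + u) * (βs + α * w) * Q) := by
  have hsplit : 2 * u / Λ * K * (βstar * P * J - u / (α + u) * (βs + α * βstar * J) * Q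
        - α * u / (α + u) * βstar ^ 2 * K * I)
      = 2 * u / Λ * K * (w * P - u / (α + u) * (βs + α * w) * Q)
        - 2 * (u / Λ * (α * u / (α + u))) * ((K * βstar) ^ 2 * I) := by
    rw [← hw]; ring
  rw [hsplit]
  exact sub_le_self _ (by positivity)

lemma bifurcation_coeff_threshold_part_neg
    (Λ u μ σ γA γI α βs ρ θ ε S0 N0 K : ℝ)
    (hΛ : Λ = 20000) (hθ : θ = 0.55) (hε : ε = 0.55)
    (hu : u = 1 / (75 * 365)) (hα : α = 1 / 10 ^ 6) (hσ : σ = 1 / 5.2)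
    (hρ : ρ = 0.4) (hγA : γA = 1 / 14) (hγI : γI = 1 / 7) (hμ : μ = 0.02)
    (hβs : βs = 0.10345) (hS0 : S0 = Λ / (α + u))
    (hN0 : N0 = S0 + α * Λ / (α + u) * u⁻¹)
    (hK : K = θ + (1 - ρ) * σ * ε / (γA + u) + ρ * σ / (γI + μ + u)) :
    let w := ((σ + u) * N0 / K - βs * S0) / (α * Λ / (α + u))
    2 * u / Λ * K *
      (w * (α * (σ + u) / (α + u) + γA * (1 - ρ) * σ / (γA + u) + γI * ρ * σ / (γI + μ + u))
        - u / (α + u) * (βs + α * w) * (1 + (1 - ρ) * σ / u + (γI + u) * ρ * σ / (γI + μ + u)))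
      < 0 := by
  subst hN0 hS0 hK
  subst hΛ hθ hε hu hα hσ hρ hγA hγI hμ hβs
  norm_num

theorem stmt18_general
    (Λ u μ σ γA γI α βs ρ θ ε τh η γ : ℝ)
    (hΛ : Λ = 20000) (hθ : θ = 0.55) (hε : ε = 0.55)
    (hu : u = 1 / (75 * 365)) (hα : α = 1 / 10 ^ 6) (hσ : σ = 1 / 5.2)
    (hρ : ρ = 0.4) (hγA : γA = 1 / 14) (hγI : γI = 1 / 7) (hμ : μ = 0.02)
    (hβs : βs = 0.10345) (hη : η = 0.2) (hγ : γ = 0.5)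
    (βr0 : ℝ → ℝ)
    (hβr0 : ∀ τ, βr0 τ =
      if τ < τh then 1 - η else 1 - η * Real.exp (-γ * (τ - τh)))
    (S0 : ℝ) (hS0 : S0 = Λ / (α + u))
    (r0 : ℝ → ℝ) (hr0 : ∀ τ, r0 τ = α * Λ / (α + u) * Real.exp (-u * τ))
    (N0 : ℝ) (hN0 : N0 = S0 + ∫ τ in Set.Ioi (0:ℝ), r0 τ)
    (K : ℝ) (hK : K = θ + (1 - ρ) * σ * ε / (γA + u) + ρ * σ / (γI + μ + u))
    (βstar : ℝ)
    (hβstar : βstar =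
      ((σ + u) * N0 / K - βs * S0) / ∫ τ in Set.Ioi (0:ℝ), βr0 τ * r0 τ)
    (a : ℝ)
    (ha : a = 2 * u / Λ * K *
      (βstar * (α * (σ + u) / (α + u) + γA * (1 - ρ) * σ / (γA + u)
          + γI * ρ * σ / (γI + μ + u)) *
        (∫ τ in Set.Ioi (0:ℝ), βr0 τ * Real.exp (-u * τ))
      - u / (α + u) *
        (βs + α * βstar * ∫ τ in Set.Ioi (0:ℝ), βr0 τ * Real.exp (-u * τ)) *
        (1 + (1 - ρ) * σ / u + (γI + u) * ρ * σ / (γI + μ + u))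
      - α * u / (α + u) * βstar ^ 2 * K *
        (∫ τ in Set.Ioi (0:ℝ),
          βr0 τ * Real.exp (-u * τ) * ∫ h in (0:ℝ)..τ, βr0 h))) :
    a < 0 := by
  have hu0 : 0 < u := by norm_num [hu]
  have hη₀ : 0 ≤ η := by norm_num [hη]
  have hη₁ : η ≤ 1 := by norm_num [hη]
  have hγ₀ : 0 ≤ γ := by norm_num [hγ]
  obtain rfl : βr0 = waningProfile τh η γ := funext hβr0
  obtain rfl : r0 = fun τ => α * Λ / (α + u) * exp (-u * τ) := funext hr0
  beta_reduce at hN0 hβstar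
  set J := ∫ τ in Ioi (0:ℝ), waningProfile τh η γ τ * exp (-u * τ)
  have hJ : 0 < J := lt_of_lt_of_le (by norm_num [hη, hu])
    (mul_inv_le_integral_mul_exp_neg_Ioi hu0 measurable_waningProfile
      (one_sub_le_waningProfile hη₀ hγ₀) (abs_waningProfile_le_one hη₀ hη₁ hγ₀))
  rw [integral_const_mul, integral_exp_neg_mul_Ioi_zero hu0] at hN0
  have hthreshold : βstar * J = ((σ + u) * N0 / K - βs * S0) / (α * Λ / (α + u)) := by
    have hdenom : (∫ τ in Ioi (0:ℝ), waningProfile τh η γ τ * (α * Λ / (α + u) * exp (-u * τ)))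
        = α * Λ / (α + u) * J := by
      rw [← integral_const_mul]; congr 1; ext τ; ring
    rw [hβstar, hdenom]
    have hc : α * Λ / (α + u) ≠ 0 := by norm_num [hα, hΛ, hu]
    field_simp
  rw [ha]
  exact (bifurcation_coeff_le_of_mul_eq hthreshold
    (setIntegral_mul_exp_neg_mul_intervalIntegral_nonneg (waningProfile_nonneg hη₀ hη₁ hγ₀))
    (by norm_num [hu, hΛ, hα])).trans_lt
    (bifurcation_coeff_threshold_part_neg Λ u μ σ γA γI α βs ρ θ ε S0 N0 K hΛ hθ hε hu hα hσ
      hρ hγA hγI hμ hβs hS0 hN0 hK)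

/-- STATEMENT 17: for the paper's parameter values with `β_s = 0.10345`, the bifurcation
coefficient satisfies `a < 0`, so the model undergoes a forward transcritical
bifurcation at `R₀ = 1`. -/
theorem stmt18
    (Λ u μ σ γA γI α βs ρ θ ε τh η γ : ℝ)
    (hΛ : Λ = 20000) (hθ : θ = 0.55) (hε : ε = 0.55)
    (hu : u = 1 / (75 * 365)) (hα : α = 1 / 10 ^ 6) (hσ : σ = 1 / 5.2)
    (hρ : ρ = 0.4) (hγA : γA = 1 / 14) (hγI : γI = 1 / 7) (hμ : μ = 0.02)
    (hβs : βs = 0.10345) (hτh : τh = 200) (hη : η = 0.2) (hγ : γ = 0.5)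
    (βr0 : ℝ → ℝ)
    (hβr0 : ∀ τ, βr0 τ =
      if τ < τh then 1 - η else 1 - η * Real.exp (-γ * (τ - τh)))
    (S0 : ℝ) (hS0 : S0 = Λ / (α + u))
    (r0 : ℝ → ℝ) (hr0 : ∀ τ, r0 τ = α * Λ / (α + u) * Real.exp (-u * τ))
    (N0 : ℝ) (hN0 : N0 = S0 + ∫ τ in Set.Ioi (0:ℝ), r0 τ)
    (K : ℝ) (hK : K = θ + (1 - ρ) * σ * ε / (γA + u) + ρ * σ / (γI + μ + u))
    (βstar : ℝ)
    (hβstar : βstar =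
      ((σ + u) * N0 / K - βs * S0) / ∫ τ in Set.Ioi (0:ℝ), βr0 τ * r0 τ)
    (a : ℝ)
    (ha : a = 2 * u / Λ * K *
      (βstar * (α * (σ + u) / (α + u) + γA * (1 - ρ) * σ / (γA + u)
          + γI * ρ * σ / (γI + μ + u)) *
        (∫ τ in Set.Ioi (0:ℝ), βr0 τ * Real.exp (-u * τ))
      - u / (α + u) *
        (βs + α * βstar * ∫ τ in Set.Ioi (0:ℝ), βr0 τ * Real.exp (-u * τ)) *
        (1 + (1 - ρ) * σ / u + (γI + u) * ρ * σ / (γI + μ + u))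
      - α * u / (α + u) * βstar ^ 2 * K *
        (∫ τ in Set.Ioi (0:ℝ),
          βr0 τ * Real.exp (-u * τ) * ∫ h in (0:ℝ)..τ, βr0 h))) :
    a < 0 :=
  stmt18_general Λ u μ σ γA γI α βs ρ θ ε τh η γ hΛ hθ hε hu hα hσ hρ hγA hγI hμ hβs hη hγ βr0 hβr0
    S0 hS0 r0 hr0 N0 hN0 K hK βstar hβstar a ha
end
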